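/- Let G be a finite simple graph with maximum degree at most 3, with the initial Toggle assignment in which every vertex has weight 1. Then G is penultimately unplayable. -/
import Mathlib


namespace Toggle

variable {V : Type*} [Fintype V] [DecidableEq V]

/-- The closed neighborhood `N[v]` of a vertex as a `Finset`. -/
def closedNbhd (G : SimpleGraph V) [DecidableRel G.Adj] (v : V) : Finset V :=
  insert v (G.neighborFinset v)

/-- The result of a Toggle move at `v`: flip the weight of every vertex in `N[v]`. -/
def move (G : SimpleGraph V) [DecidableRel G.Adj] (ω : V → Bool) (v : V) : V → Bool :=
  fun u => if u ∈ closedNbhd G v then !(ω u) else ω u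

/-- Total weight of a position. -/
def weight (ω : V → Bool) : ℕ := (Finset.univ.filter (fun u => ω u = true)).card

/-- Weight of a position over the closed neighborhood of `v`. -/
def nbhdWeight (G : SimpleGraph V) [DecidableRel G.Adj] (ω : V → Bool) (v : V) : ℕ :=
  ((closedNbhd G v).filter (fun u => ω u = true)).card

/-- A Toggle move at `v` is legal iff `ω v = 1` and the move strictly decreases the
weight over `N[v]`. -/
def IsLegal (G : SimpleGraph V) [DecidableRel G.Adj] (ω : V → Bool) (v : V) : Prop :=
  ω v = true ∧ nbhdWeight G (move G ω v) v < nbhdWeight G ω v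

instance (G : SimpleGraph V) [DecidableRel G.Adj] (ω : V → Bool) (v : V) :
    Decidable (IsLegal G ω v) :=
  inferInstanceAs (Decidable (ω v = true ∧ nbhdWeight G (move G ω v) v < nbhdWeight G ω v))

theorem weight_move_lt (G : SimpleGraph V) [DecidableRel G.Adj] {ω : V → Bool} {v : V}
    (h : IsLegal G ω v) : weight (move G ω v) < weight ω := by
  have key : ∀ ψ : V → Bool,
      weight ψ = ((closedNbhd G v).filter (fun u => ψ u = true)).card
        + ((Finset.univ \ closedNbhd G v).filter (fun u => ψ u = true)).card := by
    intro ψ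
    rw [weight, ← Finset.card_union_of_disjoint
      (Finset.disjoint_filter_filter Finset.disjoint_sdiff)]
    congr 1
    ext u
    simp only [Finset.mem_filter, Finset.mem_union, Finset.mem_sdiff, Finset.mem_univ,
      true_and]
    tauto
  have hout : ((Finset.univ \ closedNbhd G v).filter (fun u => move G ω v u = true))
      = ((Finset.univ \ closedNbhd G v).filter (fun u => ω u = true)) := by
    apply Finset.filter_congr
    intro u hu
    rw [Finset.mem_sdiff] at hu
    simp [move, hu.2]
  have h2 := h.2
  rw [key (move G ω v), key ω, hout]
  unfold nbhdWeight at h2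
  omega

/-- Minimal excludant of a finite set of naturals. -/
noncomputable def mex (s : Finset ℕ) : ℕ := sInf {n : ℕ | n ∉ s}

/-- The Nimber (Grundy value) of a Toggle position. -/
noncomputable def grundy (G : SimpleGraph V) [DecidableRel G.Adj] (ω : V → Bool) : ℕ :=
  mex ((Finset.univ.filter (fun v => IsLegal G ω v)).attach.image
    (fun v => grundy G (move G ω v.1)))
termination_by weight ω
decreasing_by
  have hv := v.2
  rw [Finset.mem_filter] at hv
  exact weight_move_lt G hv.2

/-- One legal Toggle move transforms `ω` into `ω'`. -/
def Step (G : SimpleGraph V) [DecidableRel G.Adj] (ω ω' : V → Bool) : Prop :=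
  ∃ v, IsLegal G ω v ∧ ω' = move G ω v

/-- `ω'` is reachable from `ω` by a (possibly empty) sequence of legal moves. -/
def Reach (G : SimpleGraph V) [DecidableRel G.Adj] (ω ω' : V → Bool) : Prop :=
  Relation.ReflTransGen (Step G) ω ω'

/-- `v` is terminally unplayable at `ω`: unplayable at `ω` and at every position
reachable from `ω`. -/
def TerminallyUnplayable (G : SimpleGraph V) [DecidableRel G.Adj] (ω : V → Bool) (v : V) :
    Prop :=
  ∀ ω', Reach G ω ω' → ¬ IsLegal G ω' v

/-- `v` is penultimately unplayable for the initial position `ω₀`: at every position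
reachable from `ω₀`, after any legal move at a vertex `u ∈ N[v]`, the vertex `v` is
terminally unplayable. -/
def PenultimatelyUnplayableAt (G : SimpleGraph V) [DecidableRel G.Adj] (ω₀ : V → Bool)
    (v : V) : Prop :=
  ∀ ω', Reach G ω₀ ω' → ∀ u ∈ closedNbhd G v, IsLegal G ω' u →
    TerminallyUnplayable G (move G ω' u) v

/-- The position `ω₀` is penultimately unplayable if every vertex is. -/
def PenultimatelyUnplayable (G : SimpleGraph V) [DecidableRel G.Adj] (ω₀ : V → Bool) :
    Prop :=
  ∀ v, PenultimatelyUnplayableAt G ω₀ v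

/-- The path graph on `Fin n`, vertices `0, 1, …, n-1` in order. -/
def pathGraph (n : ℕ) : SimpleGraph (Fin n) :=
  SimpleGraph.fromRel (fun a b => (a : ℕ) + 1 = (b : ℕ))

instance (n : ℕ) : DecidableRel (pathGraph n).Adj := fun a b =>
  decidable_of_iff _ (SimpleGraph.fromRel_adj _ a b).symm

/-- The 2×m grid graph `L_{2,m}` (0-indexed rows and columns). -/
def gridGraph (m : ℕ) : SimpleGraph (Fin 2 × Fin m) :=
  SimpleGraph.fromRel (fun a b =>
    (a.1 = b.1 ∧ (a.2 : ℕ) + 1 = (b.2 : ℕ)) ∨ (a.2 = b.2 ∧ (a.1 : ℕ) + 1 = (b.1 : ℕ)))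

instance (m : ℕ) : DecidableRel (gridGraph m).Adj := fun a b =>
  decidable_of_iff _ (SimpleGraph.fromRel_adj _ a b).symm

/-- The generalized Petersen graph `P(m,k)`; the vertex `(0, i)` is the outer vertex
`u_i` and `(1, i)` is the inner vertex `w_i` (0-indexed). -/
def petersen (m k : ℕ) : SimpleGraph (Fin 2 × Fin m) :=
  SimpleGraph.fromRel (fun a b =>
    (a.1 = 0 ∧ b.1 = 0 ∧ ((a.2 : ℕ) + 1) % m = (b.2 : ℕ)) ∨
    (a.1 = 0 ∧ b.1 = 1 ∧ a.2 = b.2) ∨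
    (a.1 = 1 ∧ b.1 = 1 ∧ ((a.2 : ℕ) + k) % m = (b.2 : ℕ)))

instance (m k : ℕ) : DecidableRel (petersen m k).Adj := fun a b =>
  decidable_of_iff _ (SimpleGraph.fromRel_adj _ a b).symm

/-- The position on `P(m,k)` where every outer vertex has weight 1 and every inner
vertex has weight 0. -/
def P01 (m : ℕ) : Fin 2 × Fin m → Bool := fun p => decide (p.1 = 0)

/-- The position on `P(m,k)` where every inner vertex has weight 1 and every outer
vertex has weight 0. -/
def P10 (m : ℕ) : Fin 2 × Fin m → Bool := fun p => decide (p.1 = 1)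

/-- The position where every vertex has weight 1. -/
def P11 (m : ℕ) : Fin 2 × Fin m → Bool := fun _ => true

/-- The Toggle position `H_m` on `L_{2,m}` (columns 0-indexed): for `m ≠ 3`, weight 0
exactly at `(0,0), (0,m-1), (1,0), (1,1), (1,m-2), (1,m-1)`; for `m = 3`, weight 0
exactly at `(0,0), (0,2), (1,0), (1,2)`. -/
def Hpos (m : ℕ) : Fin 2 × Fin m → Bool := fun p =>
  if m = 3 then !(decide ((p.2 : ℕ) = 0 ∨ (p.2 : ℕ) = 2))
  else !(decide ((p.1 = 0 ∧ ((p.2 : ℕ) = 0 ∨ (p.2 : ℕ) = m - 1)) ∨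
                 (p.1 = 1 ∧ ((p.2 : ℕ) ≤ 1 ∨ m - 2 ≤ (p.2 : ℕ)))))

/-- The Toggle position `D_m` on `L_{2,m}` (columns 0-indexed): weight 0 exactly at
`(0,0), (0,m-2), (0,m-1), (1,0), (1,1), (1,m-1)`. -/
def Dpos (m : ℕ) : Fin 2 × Fin m → Bool := fun p =>
  !(decide ((p.1 = 0 ∧ ((p.2 : ℕ) = 0 ∨ m - 2 ≤ (p.2 : ℕ))) ∨
            (p.1 = 1 ∧ ((p.2 : ℕ) ≤ 1 ∨ (p.2 : ℕ) = m - 1))))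

/-- The Nimber of the position `H_m`. -/
noncomputable def GH (m : ℕ) : ℕ := grundy (gridGraph m) (Hpos m)

/-- The Nimber of the position `D_m`. -/
noncomputable def GD (m : ℕ) : ℕ := grundy (gridGraph m) (Dpos m)

/-- The cycle graph `C_m` on `Fin m`. -/
def cycleGraph (m : ℕ) : SimpleGraph (Fin m) :=
  SimpleGraph.fromRel (fun a b => ((a : ℕ) + 1) % m = (b : ℕ))

open scoped Classical in
/-- The Nimber of a position of Jacob's Ladder on `C_m`: a position is the `Finset` of
not-yet-removed vertices, and a move at a remaining vertex `v` removes all remaining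
vertices at distance at most 2 from `v` in `C_m`. -/
noncomputable def jlGrundy (m : ℕ) (S : Finset (Fin m)) : ℕ :=
  mex (S.attach.image (fun v =>
    jlGrundy m (S.filter (fun u => 2 < (cycleGraph m).dist v.1 u))))
termination_by S.card
decreasing_by
  apply Finset.card_lt_card
  rw [Finset.ssubset_iff_of_subset (Finset.filter_subset _ _)]
  exact ⟨v.1, v.2, by simp [SimpleGraph.dist_self]⟩

/-- The position determined by a set `S` of already-played vertices: a vertex has
weight 1 iff it has been flipped an even number of times. -/
def omegaS (G : SimpleGraph V) [DecidableRel G.Adj] (S : Finset V) : V → Bool :=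
  fun x => decide ((S ∩ closedNbhd G x).card % 2 = 0)

/-- `S` is an independent set. -/
def IndepF (G : SimpleGraph V) (S : Finset V) : Prop :=
  ∀ u ∈ S, ∀ w ∈ S, ¬ G.Adj u w

lemma mem_closedNbhd {G : SimpleGraph V} [DecidableRel G.Adj] {v x : V} :
    x ∈ closedNbhd G v ↔ x = v ∨ G.Adj v x := by
  simp [closedNbhd, SimpleGraph.mem_neighborFinset]

lemma mem_closedNbhd_comm {G : SimpleGraph V} [DecidableRel G.Adj] {v x : V} :
    x ∈ closedNbhd G v ↔ v ∈ closedNbhd G x := by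
  simp only [mem_closedNbhd]
  constructor
  · rintro (rfl | h)
    · exact Or.inl rfl
    · exact Or.inr h.symm
  · rintro (rfl | h)
    · exact Or.inl rfl
    · exact Or.inr h.symm

lemma inter_closedNbhd_self {G : SimpleGraph V} [DecidableRel G.Adj] {S : Finset V}
    (hS : IndepF G S) {u : V} (hu : u ∈ S) : S ∩ closedNbhd G u = {u} := by
  ext x
  simp only [Finset.mem_inter, Finset.mem_singleton, mem_closedNbhd]
  constructor
  · rintro ⟨hxS, (rfl | hadj)⟩
    · rfl
    · exact absurd hadj.symm (hS x hxS u hu)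
  · rintro rfl; exact ⟨hu, Or.inl rfl⟩

lemma omegaS_eq_false {G : SimpleGraph V} [DecidableRel G.Adj] {S : Finset V}
    (hS : IndepF G S) {u : V} (hu : u ∈ S) : omegaS G S u = false := by
  simp [omegaS, inter_closedNbhd_self hS hu]

lemma nbhd_move_add (G : SimpleGraph V) [DecidableRel G.Adj] (ω : V → Bool) (v : V) :
    nbhdWeight G (move G ω v) v + nbhdWeight G ω v = (closedNbhd G v).card := by
  unfold nbhdWeight
  have : (closedNbhd G v).filter (fun u => move G ω v u = true)
      = (closedNbhd G v).filter (fun u => ¬ (ω u = true)) := by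
    apply Finset.filter_congr
    intro u hu
    simp [move, hu]
  rw [this, add_comm]
  exact Finset.card_filter_add_card_filter_not _

lemma card_closedNbhd (G : SimpleGraph V) [DecidableRel G.Adj] (v : V) :
    (closedNbhd G v).card = G.degree v + 1 := by
  rw [closedNbhd, Finset.card_insert_of_notMem, SimpleGraph.degree]
  simp [SimpleGraph.mem_neighborFinset]

/-- Key lemma: from a position of the form `ω_S` with `S` independent, any legal move
must be at a vertex outside the closed neighborhood of `S`. -/
lemma key {G : SimpleGraph V} [DecidableRel G.Adj] (hdeg : ∀ v, G.degree v ≤ 3)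
    {S : Finset V} (hS : IndepF G S) {v : V} (h : IsLegal G (omegaS G S) v) :
    v ∉ S ∧ ∀ u ∈ S, ¬ G.Adj u v := by
  have hveven : (S ∩ closedNbhd G v).card % 2 = 0 := of_decide_eq_true h.1
  have hvS : v ∉ S := by
    intro hvS
    rw [inter_closedNbhd_self hS hvS] at hveven
    simp at hveven
  refine ⟨hvS, fun u huS hadj => ?_⟩
  -- counting
  have hadd := nbhd_move_add G (omegaS G S) v
  have hgt : 2 * nbhdWeight G (omegaS G S) v > (closedNbhd G v).card := by
    have := h.2; omega
  set A := (closedNbhd G v).filter (fun u => omegaS G S u = true) with hA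
  set B := S ∩ closedNbhd G v with hB
  have hdisj : Disjoint A B := by
    rw [Finset.disjoint_left]
    intro x hxA hxB
    rw [hA, Finset.mem_filter] at hxA
    rw [hB, Finset.mem_inter] at hxB
    rw [omegaS_eq_false hS hxB.1] at hxA
    exact absurd hxA.2 (by simp)
  have hsub : A ∪ B ⊆ closedNbhd G v :=
    Finset.union_subset (Finset.filter_subset _ _) (Finset.inter_subset_right)
  have hcards : A.card + B.card ≤ (closedNbhd G v).card := by
    rw [← Finset.card_union_of_disjoint hdisj]
    exact Finset.card_le_card hsub
  have huB : u ∈ B := by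
    rw [hB, Finset.mem_inter, mem_closedNbhd]
    exact ⟨huS, Or.inr hadj.symm⟩
  have hB2 : 2 ≤ B.card := by
    have h1 : 1 ≤ B.card := Finset.card_pos.2 ⟨u, huB⟩
    omega
  have hcard4 : (closedNbhd G v).card ≤ 4 := by
    rw [card_closedNbhd]
    have := hdeg v
    omega
  have : nbhdWeight G (omegaS G S) v = A.card := rfl
  omega

lemma move_omegaS {G : SimpleGraph V} [DecidableRel G.Adj] {S : Finset V} {v : V}
    (hvS : v ∉ S) :
    move G (omegaS G S) v = omegaS G (insert v S) := by
  funext x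
  have hcard : ((insert v S) ∩ closedNbhd G x).card
      = (S ∩ closedNbhd G x).card + (if x ∈ closedNbhd G v then 1 else 0) := by
    by_cases hx : x ∈ closedNbhd G v
    · have hvx : v ∈ closedNbhd G x := mem_closedNbhd_comm.1 hx
      rw [Finset.insert_inter_of_mem hvx, Finset.card_insert_of_notMem (by
        simp only [Finset.mem_inter]; exact fun hc => hvS hc.1), if_pos hx]
    · have hvx : v ∉ closedNbhd G x := fun hc => hx (mem_closedNbhd_comm.1 hc)
      rw [Finset.insert_inter_of_notMem hvx, if_neg hx, add_zero]
  simp only [move, omegaS, hcard]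
  by_cases hx : x ∈ closedNbhd G v
  · rw [if_pos hx, if_pos hx]
    rcases Nat.even_or_odd (S ∩ closedNbhd G x).card with he | ho
    · rw [Nat.even_iff] at he
      simp [he, Nat.add_mod]
    · rw [Nat.odd_iff] at ho
      simp [ho, Nat.add_mod]
  · rw [if_neg hx, if_neg hx, add_zero]

lemma indep_insert {G : SimpleGraph V} {S : Finset V} (hS : IndepF G S) {v : V}
    (hadj : ∀ u ∈ S, ¬ G.Adj u v) : IndepF G (insert v S) := by
  intro a ha b hb
  rw [Finset.mem_insert] at ha hb
  rcases ha with rfl | ha <;> rcases hb with rfl | hb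
  · exact fun h => (G.irrefl h)
  · exact fun h => hadj b hb h.symm
  · exact hadj a ha
  · exact hS a ha b hb

/-- Any position reachable from `ω_S` with `S` independent is of the form `ω_T` with
`T ⊇ S` independent (assuming max degree at most 3). -/
lemma reach_omegaS {G : SimpleGraph V} [DecidableRel G.Adj] (hdeg : ∀ v, G.degree v ≤ 3)
    {S : Finset V} (hS : IndepF G S) {ω' : V → Bool}
    (h : Reach G (omegaS G S) ω') :
    ∃ T, S ⊆ T ∧ IndepF G T ∧ ω' = omegaS G T := by
  induction h with
  | refl => exact ⟨S, le_refl _, hS, rfl⟩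
  | tail _ hstep ih =>
    obtain ⟨T, hST, hT, rfl⟩ := ih
    obtain ⟨v, hleg, rfl⟩ := hstep
    obtain ⟨hvT, hvadj⟩ := key hdeg hT hleg
    exact ⟨insert v T, hST.trans (Finset.subset_insert _ _), indep_insert hT hvadj,
      move_omegaS hvT⟩

lemma omegaS_empty (G : SimpleGraph V) [DecidableRel G.Adj] :
    omegaS G (∅ : Finset V) = fun _ => true := by
  funext x
  simp [omegaS]

end Toggle

/-- a finite simple graph of maximum degree at most 3, with every vertex
initially of weight 1, is penultimately unplayable. -/
theorem statement3 {V : Type*} [Fintype V] [DecidableEq V]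
    (G : SimpleGraph V) [DecidableRel G.Adj]
    (hdeg : ∀ v, G.degree v ≤ 3) :
    Toggle.PenultimatelyUnplayable G (fun _ => true) := by
  have hempty : Toggle.IndepF G (∅ : Finset V) := by
    intro a ha; simp at ha
  intro v ω' hreach u hu hleg ω'' hreach' hleg'
  rw [← Toggle.omegaS_empty G] at hreach
  obtain ⟨T, -, hT, rfl⟩ := Toggle.reach_omegaS hdeg hempty hreach
  obtain ⟨huT, huadj⟩ := Toggle.key hdeg hT hleg
  rw [Toggle.move_omegaS huT] at hreach'
  obtain ⟨T', hTT', hT', rfl⟩ :=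
    Toggle.reach_omegaS hdeg (Toggle.indep_insert hT huadj) hreach'
  obtain ⟨hvT', hvadj⟩ := Toggle.key hdeg hT' hleg'
  have huT' : u ∈ T' := hTT' (Finset.mem_insert_self _ _)
  rw [Toggle.mem_closedNbhd] at hu
  rcases hu with rfl | hadj
  · exact hvT' huT'
  · exact hvadj u huT' hadj.symm
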